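/- arXiv:0903.0070 — 3 statements merged into one kernel-verified Lean document; each statement's English description precedes it below -/
import Mathlib

section
/- Under hypotheses (H1) and (H3), for any q ∈ 𝒮²₊ and any δ > 0 there is ε > 0 small enough such that inf{ λ_ε(q,w) : w ∈ ℝ² with inf_{θ>0} |w − θq| ≥ δ } > a(q)·q, where λ_ε(q,w) = a(w)·w + a(q−w)·(q−w) − ε|w|. -/
open scoped ENNReal Classical
open Filter

namespace KRWQ

/-- `n`-step transition probabilities of the homogeneous random walk with step
distribution `μ` on an abelian group `G`: `nstep μ n z z' = P_z(S(n) = z')`. -/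
noncomputable def nstep {G : Type*} [AddCommGroup G] (μ : G → ℝ≥0∞) : ℕ → G → G → ℝ≥0∞
  | 0, z, z' => if z' = z then 1 else 0
  | n + 1, z, z' => ∑' w : G, nstep μ n z w * μ (z' - w)

/-- `n`-step transition probabilities of the random walk killed outside the set `A`:
for `z ∈ A`, `nstepK μ A n z z' = P_z(S(n) = z', S(k) ∈ A for all k ≤ n)`. -/
noncomputable def nstepK {G : Type*} [AddCommGroup G] (μ : G → ℝ≥0∞) (A : Set G) :
    ℕ → G → G → ℝ≥0∞
  | 0, z, z' => if z' = z then 1 else 0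
  | n + 1, z, z' => A.indicator (fun u => ∑' w : G, nstepK μ A n z w * μ (u - w)) z'

/-- Green function of the homogeneous random walk. -/
noncomputable def green {G : Type*} [AddCommGroup G] (μ : G → ℝ≥0∞) (z z' : G) : ℝ≥0∞ :=
  ∑' n : ℕ, nstep μ n z z'

/-- Green function of the random walk killed outside `A`. -/
noncomputable def greenK {G : Type*} [AddCommGroup G] (μ : G → ℝ≥0∞) (A : Set G)
    (z z' : G) : ℝ≥0∞ :=
  ∑' n : ℕ, nstepK μ A n z z'

/-- Distribution of the exit position: for `z ∈ A`, `exitK μ A z w` is the probability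
that the walk started at `z` first exits `A` (in finite time) at the point `w`,
i.e. `P_z(τ < ∞, S(τ) = w)` where `τ = inf{n ≥ 0 : S(n) ∉ A}`. -/
noncomputable def exitK {G : Type*} [AddCommGroup G] (μ : G → ℝ≥0∞) (A : Set G)
    (z w : G) : ℝ≥0∞ :=
  Aᶜ.indicator (fun u => ∑' n : ℕ, ∑' v : G, nstepK μ A n z v * μ (u - v)) w

/-- `Eexit μ A z f = E_z(f(S(τ)); τ < ∞)` for a nonnegative `f`,
where `τ` is the first exit time from `A` and `z ∈ A`. -/
noncomputable def Eexit {G : Type*} [AddCommGroup G] (μ : G → ℝ≥0∞) (A : Set G) (z : G)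
    (f : G → ℝ≥0∞) : ℝ≥0∞ :=
  ∑' w : G, exitK μ A z w * f w

/-- `EexitR μ A z f = E_z(f(S(τ)); τ < ∞)` for a signed `f` (real-valued version). -/
noncomputable def EexitR {G : Type*} [AddCommGroup G] (μ : G → ℝ≥0∞) (A : Set G) (z : G)
    (f : G → ℝ) : ℝ :=
  ∑' w : G, (exitK μ A z w).toReal * f w

/-- Euclidean scalar product on `ℝ²`. -/
def dot (a b : ℝ × ℝ) : ℝ := a.1 * b.1 + a.2 * b.2

/-- Embedding of the lattice `ℤ²` into `ℝ²`. -/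
def toR (z : ℤ × ℤ) : ℝ × ℝ := ((z.1 : ℝ), (z.2 : ℝ))

/-- Euclidean norm on `ℝ²`. -/
noncomputable def norE (p : ℝ × ℝ) : ℝ := Real.sqrt (p.1 ^ 2 + p.2 ^ 2)

/-- Euclidean norm of a lattice point. -/
noncomputable def normZ (z : ℤ × ℤ) : ℝ := norE (toR z)

/-- The open quadrant `ℕ* × ℕ*`. -/
def quadrant : Set (ℤ × ℤ) := {z | 0 < z.1 ∧ 0 < z.2}

/-- The half plane `ℤ × ℕ*` (state space of the local process `Z¹₊`). -/
def upperHalf : Set (ℤ × ℤ) := {z | 0 < z.2}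

/-- The half plane `ℕ* × ℤ` (state space of the local process `Z²₊`). -/
def rightHalf : Set (ℤ × ℤ) := {z | 0 < z.1}

/-- The jump generating function `φ(a) = ∑_z μ(z) exp(a·z)`. -/
noncomputable def jumpGF (μ : ℤ × ℤ → ℝ≥0∞) (a : ℝ × ℝ) : ℝ≥0∞ :=
  ∑' z : ℤ × ℤ, μ z * ENNReal.ofReal (Real.exp (dot a (toR z)))

/-- Hypothesis (H1): the homogeneous random walk `S` with step distribution `μ`
is irreducible, and its mean `m = ∑_z z μ(z)` exists and is nonzero. -/
def H1 (μ : ℤ × ℤ → ℝ≥0∞) : Prop :=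
  (∀ z z' : ℤ × ℤ, ∃ n : ℕ, 0 < nstep μ n z z') ∧
    Summable (fun z : ℤ × ℤ => ((z.1 : ℝ)) * (μ z).toReal) ∧
    Summable (fun z : ℤ × ℤ => ((z.2 : ℝ)) * (μ z).toReal) ∧
    ((∑' z : ℤ × ℤ, ((z.1 : ℝ)) * (μ z).toReal, ∑' z : ℤ × ℤ, ((z.2 : ℝ)) * (μ z).toReal)
      ≠ ((0 : ℝ), (0 : ℝ)))

/-- Hypothesis (H2): the random walk killed outside the quadrant is irreducible
on the quadrant. -/
def H2 (μ : ℤ × ℤ → ℝ≥0∞) : Prop :=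
  ∀ z ∈ quadrant, ∀ z' ∈ quadrant, ∃ n : ℕ, 0 < nstepK μ quadrant n z z'

/-- Hypothesis (H3): the jump generating function is finite everywhere on `ℝ²`. -/
def H3 (μ : ℤ × ℤ → ℝ≥0∞) : Prop := ∀ a : ℝ × ℝ, jumpGF μ a < ⊤

/-- `d` is a greatest common divisor of the set `K` of natural numbers. -/
def IsGcdOfSet (K : Set ℕ) (d : ℕ) : Prop :=
  (∀ k ∈ K, d ∣ k) ∧ ∀ c : ℕ, (∀ k ∈ K, c ∣ k) → c ∣ d

/-- First marginal of `μ`: step distribution of the coordinate walk `S₁`. -/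
noncomputable def marg1 (μ : ℤ × ℤ → ℝ≥0∞) : ℤ → ℝ≥0∞ := fun x => ∑' y : ℤ, μ (x, y)

/-- Second marginal of `μ`: step distribution of the coordinate walk `S₂`. -/
noncomputable def marg2 (μ : ℤ × ℤ → ℝ≥0∞) : ℤ → ℝ≥0∞ := fun y => ∑' x : ℤ, μ (x, y)

/-- Hypothesis (H4): the coordinate random walks `S₁` and `S₂` are aperiodic on `ℤ`. -/
def H4 (μ : ℤ × ℤ → ℝ≥0∞) : Prop :=
  IsGcdOfSet {k : ℕ | 0 < k ∧ 0 < nstep (marg1 μ) k (0 : ℤ) 0} 1 ∧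
    IsGcdOfSet {k : ℕ | 0 < k ∧ 0 < nstep (marg2 μ) k (0 : ℤ) 0} 1

/-- The set `𝒮²₊` of unit vectors of `ℝ²` with nonnegative coordinates. -/
def Spos : Set (ℝ × ℝ) := {q | 0 ≤ q.1 ∧ 0 ≤ q.2 ∧ norE q = 1}

/-- `aOf` is the map `q ↦ a(q)`, the inverse of the homeomorphism
`a ↦ ∇φ(a)/|∇φ(a)|` from `∂D` onto the unit circle (extended to all nonzero `q` by
homogeneity).  Equivalently, `a(q)` is the unique point of `D = {a : φ(a) ≤ 1}` where
the linear functional `a ↦ a·q` attains its maximum over `D`, and it lies on `∂D`. -/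
def IsDirMap (μ : ℤ × ℤ → ℝ≥0∞) (aOf : ℝ × ℝ → ℝ × ℝ) : Prop :=
  ∀ q : ℝ × ℝ, q ≠ 0 →
    jumpGF μ (aOf q) = 1 ∧
      ∀ a : ℝ × ℝ, jumpGF μ a ≤ 1 → a ≠ aOf q → dot a q < dot (aOf q) q

/-- The arc `Γ₊ = {a ∈ ∂D : q(a) ∈ 𝒮²₊}`. -/
def GammaPlus (aOf : ℝ × ℝ → ℝ × ℝ) : Set (ℝ × ℝ) := {a | ∃ q ∈ Spos, a = aOf q}

/-- The integrand appearing in the boundary term of `h_a`. -/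
noncomputable def haIntegrand (aOf : ℝ × ℝ → ℝ × ℝ) (a : ℝ × ℝ) (w : ℤ × ℤ) : ℝ :=
  if a = aOf ((0 : ℝ), (1 : ℝ)) then (w.1 : ℝ) * Real.exp (dot a (toR w))
  else if a = aOf ((1 : ℝ), (0 : ℝ)) then (w.2 : ℝ) * Real.exp (dot a (toR w))
  else Real.exp (dot a (toR w))

/-- The leading term of `h_a`. -/
noncomputable def haLead (aOf : ℝ × ℝ → ℝ × ℝ) (a : ℝ × ℝ) (z : ℤ × ℤ) : ℝ :=
  if a = aOf ((0 : ℝ), (1 : ℝ)) then (z.1 : ℝ) * Real.exp (dot a (toR z))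
  else if a = aOf ((1 : ℝ), (0 : ℝ)) then (z.2 : ℝ) * Real.exp (dot a (toR z))
  else Real.exp (dot a (toR z))

/-- The harmonic function `h_a` of the killed random walk, defined by (1.3). -/
noncomputable def haFun (μ : ℤ × ℤ → ℝ≥0∞) (aOf : ℝ × ℝ → ℝ × ℝ) (a : ℝ × ℝ)
    (z : ℤ × ℤ) : ℝ :=
  haLead aOf a z - EexitR μ quadrant z (haIntegrand aOf a)

/-- Expectation over the event `{τ = τ₁ < τ₂}`, i.e. the walk exits the quadrant
through the boundary `{w : w₁ ≤ 0, w₂ > 0}`. -/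
noncomputable def Eexit1 (μ : ℤ × ℤ → ℝ≥0∞) (z : ℤ × ℤ) (f : ℤ × ℤ → ℝ≥0∞) : ℝ≥0∞ :=
  ∑' w : ℤ × ℤ, (if w.1 ≤ 0 ∧ 0 < w.2 then exitK μ quadrant z w * f w else 0)

/-- The support function `w ↦ a(w)·w = max_{a ∈ D} a·w`, with the convention that it
vanishes at `w = 0`. -/
noncomputable def support (aOf : ℝ × ℝ → ℝ × ℝ) (w : ℝ × ℝ) : ℝ :=
  if w = 0 then 0 else dot (aOf w) w

/-- The function `λ_ε(q,w) = a(w)·w + a(q-w)·(q-w) - ε|w|`. -/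
noncomputable def lamEps (aOf : ℝ × ℝ → ℝ × ℝ) (ε : ℝ) (q w : ℝ × ℝ) : ℝ :=
  support aOf w + support aOf (q - w) - ε * norE w

/-- The principal part `Ξ^q_δ(z,zₙ)` of the renewal equation. -/
noncomputable def XiQ (μ : ℤ × ℤ → ℝ≥0∞) (q : ℝ × ℝ) (δ : ℝ) (z zn : ℤ × ℤ) : ℝ :=
  if q = ((1 : ℝ), (0 : ℝ)) then
    (greenK μ upperHalf z zn).toReal -
      ∑' w : ℤ × ℤ, (exitK μ quadrant z w).toReal *
        (if w.1 ≤ 0 ∧ 0 < w.2 ∧ normZ w < δ * normZ zn then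
          (greenK μ upperHalf w zn).toReal else 0)
  else if q = ((0 : ℝ), (1 : ℝ)) then
    (greenK μ rightHalf z zn).toReal -
      ∑' w : ℤ × ℤ, (exitK μ quadrant z w).toReal *
        (if w.2 ≤ 0 ∧ 0 < w.1 ∧ normZ w < δ * normZ zn then
          (greenK μ rightHalf w zn).toReal else 0)
  else
    (green μ z zn).toReal -
      ∑' w : ℤ × ℤ, (exitK μ quadrant z w).toReal *
        (if normZ w < δ * normZ zn then (green μ w zn).toReal else 0)

/-!
The support function `s(w) = max_{a ∈ D} a·w` is sublinear and continuous, so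
`F(w) = s(w) + s(q - w) ≥ s(q)`, and equality for `w ≠ 0` forces `a(w) = a(q)`. Moving from
`0` against the nonzero mean gives a point with `φ < 1`, hence `∇φ ≠ 0` on `∂D`, and the
normal cone of the smooth convex set `D` at `a(q)` is the ray through `∇φ(a(q))`: so
`a(w) = a(q)` puts `w` on the ray `ℝ₊q`. Off that ray `F > s(q)`, uniformly on bounded sets
by compactness, while `s(w) + s(-w) ≥ c₀|w|` makes `F` grow linearly at infinity; this
leaves room for the term `-ε|w|`.
-/

open Topology

lemma dot_add_left (a b w : ℝ × ℝ) : dot (a + b) w = dot a w + dot b w := by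
  simp only [dot, Prod.fst_add, Prod.snd_add]; ring

lemma dot_sub_left (a b w : ℝ × ℝ) : dot (a - b) w = dot a w - dot b w := by
  simp only [dot, Prod.fst_sub, Prod.snd_sub]; ring

lemma dot_smul_left (t : ℝ) (a w : ℝ × ℝ) : dot (t • a) w = t * dot a w := by
  simp only [dot, Prod.smul_fst, Prod.smul_snd, smul_eq_mul]; ring

lemma dot_add_right (a x y : ℝ × ℝ) : dot a (x + y) = dot a x + dot a y := by
  simp only [dot, Prod.fst_add, Prod.snd_add]; ring

lemma dot_smul_right (t : ℝ) (a w : ℝ × ℝ) : dot a (t • w) = t * dot a w := by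
  simp only [dot, Prod.smul_fst, Prod.smul_snd, smul_eq_mul]; ring

lemma dot_neg_right (a w : ℝ × ℝ) : dot a (-w) = -dot a w := by
  simp only [dot, Prod.fst_neg, Prod.snd_neg]; ring

lemma dot_zero_right (a : ℝ × ℝ) : dot a 0 = 0 := by
  simp [dot]

lemma dot_self_pos {p : ℝ × ℝ} (hp : p ≠ 0) : 0 < dot p p := by
  have : p.1 ≠ 0 ∨ p.2 ≠ 0 := by
    by_contra! h
    exact hp (Prod.ext h.1 h.2)
  unfold dot
  rcases this with h | h
  · nlinarith [mul_self_pos.2 h, mul_self_nonneg p.2]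
  · nlinarith [mul_self_pos.2 h, mul_self_nonneg p.1]

lemma norE_smul (t : ℝ) (p : ℝ × ℝ) : norE (t • p) = |t| * norE p := by
  have : (t • p).1 ^ 2 + (t • p).2 ^ 2 = t ^ 2 * (p.1 ^ 2 + p.2 ^ 2) := by
    simp only [Prod.smul_fst, Prod.smul_snd, smul_eq_mul]; ring
  rw [norE, this, Real.sqrt_mul (sq_nonneg t), Real.sqrt_sq_eq_abs, norE]

lemma norE_pos {p : ℝ × ℝ} (hp : p ≠ 0) : 0 < norE p :=
  Real.sqrt_pos.2 (by simpa [dot, sq] using dot_self_pos hp)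

lemma continuous_norE : Continuous norE := by
  unfold norE; fun_prop

lemma isCompact_norE_le (R : ℝ) : IsCompact {p : ℝ × ℝ | norE p ≤ R} := by
  refine (isCompact_closedBall (0 : ℝ × ℝ) R).of_isClosed_subset
    (isClosed_le continuous_norE continuous_const) fun p hp => ?_
  have hcoord : ∀ x y : ℝ, |x| ≤ Real.sqrt (x ^ 2 + y ^ 2) := fun x y => by
    rw [← Real.sqrt_sq_eq_abs]
    exact Real.sqrt_le_sqrt (by nlinarith [sq_nonneg y])
  rw [Metric.mem_closedBall, dist_zero_right, Prod.norm_def]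
  refine max_le ((hcoord _ _).trans hp) ((hcoord p.2 p.1).trans ?_)
  rwa [add_comm]

lemma exists_pos_smul_of_dot_neg {G u : ℝ × ℝ} (hG : G ≠ 0)
    (h : ∀ v, dot v G < 0 → dot v u < 0) : ∃ c : ℝ, 0 < c ∧ u = c • G := by
  set d := dot G u
  set p := G.1 * u.2 - G.2 * u.1
  -- test directions `-G + s • G⊥`, all strictly descending
  have key (s : ℝ) : s * p < d := by
    have := h (-G.1 - s * G.2, -G.2 + s * G.1) (by
      have := dot_self_pos hG
      simp only [dot] at this ⊢
      nlinarith)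
    simp only [dot, d, p] at this ⊢
    linarith
  have hp : p = 0 := by
    by_contra hp
    have := key ((d + 1) / p)
    rw [div_mul_cancel₀ _ hp] at this
    linarith
  have hd : 0 < d := by simpa using key 0
  have hGG := dot_self_pos hG
  refine ⟨d / dot G G, div_pos hd hGG, Prod.ext ?_ ?_⟩ <;>
      simp only [Prod.smul_fst, Prod.smul_snd, smul_eq_mul] <;> field_simp <;>
      simp only [dot, d, p] at hp ⊢
  · linear_combination -G.2 * hp
  · linear_combination G.1 * hp

lemma ne_zero_and_ne_smul_of_le_norE_sub {q w : ℝ × ℝ} (hq : norE q = 1) {δ : ℝ} (hδ : 0 < δ)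
    (hw : ∀ θ : ℝ, 0 < θ → δ ≤ norE (w - θ • q)) : w ≠ 0 ∧ ∀ θ : ℝ, 0 < θ → w ≠ θ • q := by
  refine ⟨?_, fun θ hθ hwθ => ?_⟩
  · rintro rfl
    have := hw (δ / 2) (half_pos hδ)
    rw [zero_sub, ← neg_smul, norE_smul, hq, abs_neg, abs_of_pos (half_pos hδ)] at this
    linarith
  · have := hw θ hθ
    rw [hwθ, sub_self, ← zero_smul ℝ q, norE_smul, abs_zero, zero_mul] at this
    linarith

lemma isClosed_setOf_le_norE_sub (q : ℝ × ℝ) (δ : ℝ) :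
    IsClosed {w : ℝ × ℝ | ∀ θ : ℝ, 0 < θ → δ ≤ norE (w - θ • q)} := by
  simp only [Set.ofPred_forall]
  exact isClosed_iInter fun θ => isClosed_iInter fun _ =>
    isClosed_le continuous_const (continuous_norE.comp (continuous_sub_right _))

lemma exists_pos_mul_norE_le {f : ℝ × ℝ → ℝ} (hf : Continuous f)
    (hhom : ∀ t : ℝ, 0 ≤ t → ∀ w, f (t • w) = t * f w) (hpos : ∀ u, u ≠ 0 → 0 < f u) :
    ∃ c₀ : ℝ, 0 < c₀ ∧ ∀ w, c₀ * norE w ≤ f w := by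
  have hS : IsCompact {u : ℝ × ℝ | norE u = 1} :=
    (isCompact_norE_le 1).of_isClosed_subset (isClosed_eq continuous_norE continuous_const)
      fun u hu => le_of_eq hu
  have hne : ({u : ℝ × ℝ | norE u = 1}).Nonempty := ⟨((1 : ℝ), (0 : ℝ)), by simp [norE]⟩
  obtain ⟨u₀, hu₀, hmin⟩ := hS.exists_isMinOn hne hf.continuousOn
  have hu₀0 : u₀ ≠ 0 := by
    rintro rfl
    simp [norE] at hu₀
  refine ⟨f u₀, hpos u₀ hu₀0, fun w => ?_⟩
  rcases eq_or_ne w 0 with rfl | hw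
  · simpa [norE] using (hhom 0 le_rfl 0).ge
  have hn := norE_pos hw
  have hunit : norE ((norE w)⁻¹ • w) = 1 := by
    rw [norE_smul, abs_of_pos (inv_pos.2 hn), inv_mul_cancel₀ hn.ne']
  calc f u₀ * norE w ≤ f ((norE w)⁻¹ • w) * norE w :=
        mul_le_mul_of_nonneg_right (hmin hunit) hn.le
    _ = f w := by
        rw [hhom _ (inv_nonneg.2 hn.le), mul_comm, ← mul_assoc, mul_inv_cancel₀ hn.ne', one_mul]

lemma exists_gap_sub_mul_of_coercive {X : Type*} [TopologicalSpace X] {A : Set X}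
    (hA : IsClosed A) {F N : X → ℝ} (hF : ContinuousOn F A)
    (hN : ∀ R, IsCompact {x | N x ≤ R}) {L c₀ C : ℝ} (hc₀ : 0 < c₀)
    (hgt : ∀ x ∈ A, L < F x) (hgrow : ∀ x ∈ A, c₀ * N x - C ≤ F x) :
    ∃ ε : ℝ, 0 < ε ∧ ∃ c : ℝ, L < c ∧ ∀ x ∈ A, c ≤ F x - ε * N x := by
  set R := max 1 (2 * (C + L + 1) / c₀)
  have hR : 0 < R := lt_max_of_lt_left one_pos
  have hRC : L + 1 ≤ c₀ / 2 * R - C := by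
    have := mul_le_mul_of_nonneg_left (le_max_right 1 (2 * (C + L + 1) / c₀))
      (half_pos hc₀).le
    rw [show c₀ / 2 * (2 * (C + L + 1) / c₀) = C + L + 1 by field_simp] at this
    linarith
  obtain ⟨m, hLm, hm⟩ : ∃ m > L, ∀ x ∈ A, N x ≤ R → m ≤ F x := by
    rcases ({x | N x ≤ R} ∩ A).eq_empty_or_nonempty with hK | hK
    · exact ⟨L + 1, by linarith, fun x hx hxR => absurd (hK.subset ⟨hxR, hx⟩) id⟩
    · obtain ⟨x₀, hx₀, hmin⟩ :=
        ((hN R).inter_right hA).exists_isMinOn hK (hF.mono Set.inter_subset_right)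
      exact ⟨F x₀, hgt x₀ hx₀.2, fun x hx hxR => hmin ⟨hxR, hx⟩⟩
  set ε := min (c₀ / 2) ((m - L) / (2 * R))
  have hε : 0 < ε := lt_min (half_pos hc₀) (div_pos (by linarith) (by linarith))
  refine ⟨ε, hε, min ((m + L) / 2) (L + 1), lt_min (by linarith) (by linarith), fun x hx => ?_⟩
  rcases le_or_gt (N x) R with hxR | hxR
  · have : ε * N x ≤ (m - L) / 2 :=
      calc ε * N x ≤ ε * R := mul_le_mul_of_nonneg_left hxR hε.le
        _ ≤ (m - L) / (2 * R) * R := mul_le_mul_of_nonneg_right (min_le_right _ _) hR.le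
        _ = (m - L) / 2 := by field_simp
    linarith [min_le_left ((m + L) / 2) (L + 1), hm x hx hxR]
  · have h₁ : ε * N x ≤ c₀ / 2 * N x :=
      mul_le_mul_of_nonneg_right (min_le_left _ _) (hR.trans hxR).le
    have h₂ : c₀ / 2 * R ≤ c₀ / 2 * N x := mul_le_mul_of_nonneg_left hxR.le (half_pos hc₀).le
    linarith [min_le_right ((m + L) / 2) (L + 1), hgrow x hx]

lemma abs_le_exp_add_exp_neg (x : ℝ) : |x| ≤ Real.exp x + Real.exp (-x) :=
  abs_le.2 ⟨by linarith [Real.add_one_le_exp (-x), Real.exp_pos x],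
    by linarith [Real.add_one_le_exp x, Real.exp_pos (-x)]⟩

lemma abs_inv_mul_exp_mul_sub_one_le (x : ℝ) {t : ℝ} (ht : 0 < t) (ht1 : t ≤ 1) :
    |t⁻¹ * (Real.exp (t * x) - 1)| ≤ Real.exp x + Real.exp (-x) := by
  -- by convexity of `exp`, the difference quotient lies between `x` and `exp x - 1`
  have hconv := convexOn_exp.2 (Set.mem_univ x) (Set.mem_univ 0) ht.le (sub_nonneg.2 ht1)
    (add_sub_cancel t 1)
  simp only [smul_eq_mul, mul_zero, add_zero, Real.exp_zero, mul_one] at hconv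
  have hlow : x ≤ t⁻¹ * (Real.exp (t * x) - 1) := by
    rw [← div_eq_inv_mul, le_div_iff₀ ht]
    linarith [Real.add_one_le_exp (t * x)]
  have hup : t⁻¹ * (Real.exp (t * x) - 1) ≤ Real.exp x - 1 := by
    rw [← div_eq_inv_mul, div_le_iff₀ ht]
    linarith
  exact abs_le.2 ⟨by linarith [Real.add_one_le_exp (-x), Real.exp_pos x],
    by linarith [Real.exp_pos (-x)]⟩

lemma tendsto_inv_mul_exp_mul_sub_one (x : ℝ) :
    Tendsto (fun t => t⁻¹ * (Real.exp (t * x) - 1)) (𝓝[>] 0) (𝓝 x) := by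
  have hderiv : HasDerivAt (fun t => Real.exp (t * x)) x 0 := by
    simpa using (hasDerivAt_mul_const x (x := (0 : ℝ))).exp
  refine (hderiv.tendsto_slope.mono_left (nhdsGT_le_nhdsNE 0)).congr fun t => ?_
  simp [slope_def_field, div_eq_inv_mul]

section JumpGF

variable {μ : ℤ × ℤ → ℝ≥0∞}

noncomputable def phiR (μ : ℤ × ℤ → ℝ≥0∞) (a : ℝ × ℝ) : ℝ :=
  ∑' z : ℤ × ℤ, (μ z).toReal * Real.exp (dot a (toR z))

noncomputable def gradPhi (μ : ℤ × ℤ → ℝ≥0∞) (a : ℝ × ℝ) : ℝ × ℝ :=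
  (∑' z : ℤ × ℤ, (μ z).toReal * Real.exp (dot a (toR z)) * z.1,
    ∑' z : ℤ × ℤ, (μ z).toReal * Real.exp (dot a (toR z)) * z.2)

lemma phiR_eq_toReal_jumpGF (h3 : H3 μ) (a : ℝ × ℝ) : phiR μ a = (jumpGF μ a).toReal := by
  rw [jumpGF, ENNReal.tsum_toReal_eq fun z => ENNReal.ne_top_of_tsum_ne_top (h3 a).ne z]
  refine tsum_congr fun z => ?_
  rw [ENNReal.toReal_mul, ENNReal.toReal_ofReal (Real.exp_pos _).le]

lemma jumpGF_eq_ofReal_phiR (h3 : H3 μ) (a : ℝ × ℝ) :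
    jumpGF μ a = ENNReal.ofReal (phiR μ a) := by
  rw [phiR_eq_toReal_jumpGF h3, ENNReal.ofReal_toReal (h3 a).ne]

lemma jumpGF_le_one_iff (h3 : H3 μ) (a : ℝ × ℝ) : jumpGF μ a ≤ 1 ↔ phiR μ a ≤ 1 := by
  rw [jumpGF_eq_ofReal_phiR h3]; exact ENNReal.ofReal_le_one

lemma jumpGF_eq_one_iff (h3 : H3 μ) (a : ℝ × ℝ) : jumpGF μ a = 1 ↔ phiR μ a = 1 := by
  rw [jumpGF_eq_ofReal_phiR h3]; exact ENNReal.ofReal_eq_one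

lemma summable_phiR (h3 : H3 μ) (a : ℝ × ℝ) :
    Summable fun z : ℤ × ℤ => (μ z).toReal * Real.exp (dot a (toR z)) := by
  refine (ENNReal.summable_toReal (h3 a).ne).congr fun z => ?_
  rw [ENNReal.toReal_mul, ENNReal.toReal_ofReal (Real.exp_pos _).le]

lemma summable_mul_of_abs_le_exp (h3 : H3 μ) (a v : ℝ × ℝ) {r : ℤ × ℤ → ℝ}
    (hr : ∀ z, |r z| ≤ Real.exp (dot v (toR z)) + Real.exp (-dot v (toR z))) :
    Summable fun z : ℤ × ℤ => (μ z).toReal * Real.exp (dot a (toR z)) * r z := by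
  refine Summable.of_norm_bounded ((summable_phiR h3 (a + v)).add (summable_phiR h3 (a - v)))
    fun z => ?_
  have hw : 0 ≤ (μ z).toReal * Real.exp (dot a (toR z)) := by positivity
  rw [norm_mul, Real.norm_of_nonneg hw, dot_add_left, dot_sub_left, Real.exp_add,
    Real.exp_sub, div_eq_mul_inv, ← Real.exp_neg]
  calc _ ≤ (μ z).toReal * Real.exp (dot a (toR z)) *
        (Real.exp (dot v (toR z)) + Real.exp (-dot v (toR z))) :=
        mul_le_mul_of_nonneg_left (hr z) hw
    _ = _ := by ring

lemma hasSum_dot_gradPhi (h3 : H3 μ) (a v : ℝ × ℝ) :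
    HasSum (fun z : ℤ × ℤ => (μ z).toReal * Real.exp (dot a (toR z)) * dot v (toR z))
      (dot v (gradPhi μ a)) := by
  have hcoord (e : ℝ × ℝ) :=
    summable_mul_of_abs_le_exp h3 a e fun z => abs_le_exp_add_exp_neg (dot e (toR z))
  have h₁ := hcoord (1, 0)
  have h₂ := hcoord (0, 1)
  simp only [dot, toR, one_mul, zero_mul, add_zero, zero_add] at h₁ h₂
  refine ((h₁.hasSum.mul_left v.1).add (h₂.hasSum.mul_left v.2)).congr_fun fun z => ?_
  simp only [dot, toR]
  ring

lemma phiR_add_dot_gradPhi_le (h3 : H3 μ) (a v : ℝ × ℝ) :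
    phiR μ a + dot v (gradPhi μ a) ≤ phiR μ (a + v) := by
  refine hasSum_le (fun z => ?_) ((summable_phiR h3 a).hasSum.add (hasSum_dot_gradPhi h3 a v))
    (summable_phiR h3 (a + v)).hasSum
  have hw : 0 ≤ (μ z).toReal * Real.exp (dot a (toR z)) := by positivity
  rw [dot_add_left, Real.exp_add, ← mul_assoc, ← mul_one_add]
  exact mul_le_mul_of_nonneg_left (by linarith [Real.add_one_le_exp (dot v (toR z))]) hw

lemma tendsto_inv_mul_phiR_sub (h3 : H3 μ) (a v : ℝ × ℝ) :
    Tendsto (fun t => t⁻¹ * (phiR μ (a + t • v) - phiR μ a)) (𝓝[>] 0)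
      (𝓝 (dot v (gradPhi μ a))) := by
  have hsplit : ∀ t : ℝ, t⁻¹ * (phiR μ (a + t • v) - phiR μ a) = ∑' z : ℤ × ℤ,
      (μ z).toReal * Real.exp (dot a (toR z)) *
        (t⁻¹ * (Real.exp (t * dot v (toR z)) - 1)) := by
    intro t
    rw [phiR, phiR, ← (summable_phiR h3 _).tsum_sub (summable_phiR h3 _), ← tsum_mul_left]
    congr with z
    rw [dot_add_left, dot_smul_left, Real.exp_add]
    ring
  simp only [hsplit]
  rw [← (hasSum_dot_gradPhi h3 a v).tsum_eq]
  refine tendsto_tsum_of_dominated_convergence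
    (summable_mul_of_abs_le_exp h3 a v fun z => (abs_of_pos (by positivity)).le)
    (fun z => (tendsto_inv_mul_exp_mul_sub_one _).const_mul _) ?_
  filter_upwards [Ioc_mem_nhdsGT zero_lt_one] with t ht z
  rw [norm_mul, Real.norm_of_nonneg (by positivity)]
  exact mul_le_mul_of_nonneg_left (abs_inv_mul_exp_mul_sub_one_le _ ht.1 ht.2) (by positivity)

lemma exists_phiR_lt_of_dot_gradPhi_neg (h3 : H3 μ) {a v : ℝ × ℝ}
    (hv : dot v (gradPhi μ a) < 0) : ∃ t : ℝ, 0 < t ∧ phiR μ (a + t • v) < phiR μ a := by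
  obtain ⟨t, hneg, ht⟩ := (((tendsto_inv_mul_phiR_sub h3 a v).eventually
    (gt_mem_nhds hv)).and self_mem_nhdsWithin).exists
  exact ⟨t, ht, sub_neg.1 (neg_of_mul_neg_right hneg (inv_nonneg.2 (le_of_lt ht)))⟩

lemma exists_phiR_lt_one (hprob : ∑' z : ℤ × ℤ, μ z = 1) (h1 : H1 μ) (h3 : H3 μ) :
    ∃ b : ℝ × ℝ, phiR μ b < 1 := by
  have hphi0 : phiR μ 0 = 1 := by
    simp [phiR_eq_toReal_jumpGF h3, jumpGF, dot, hprob]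
  have hmean : gradPhi μ 0 ≠ 0 := by
    simpa [gradPhi, dot, mul_comm] using h1.2.2.2
  have hv : dot (-gradPhi μ 0) (gradPhi μ 0) < 0 := by
    rw [show -gradPhi μ 0 = (-1 : ℝ) • gradPhi μ 0 by simp, dot_smul_left]
    linarith [dot_self_pos hmean]
  obtain ⟨t, -, ht⟩ := exists_phiR_lt_of_dot_gradPhi_neg h3 hv
  exact ⟨_, ht.trans_eq hphi0⟩

end JumpGF

section Support

variable {μ : ℤ × ℤ → ℝ≥0∞} {aOf : ℝ × ℝ → ℝ × ℝ}

lemma support_of_ne_zero {w : ℝ × ℝ} (hw : w ≠ 0) : support aOf w = dot (aOf w) w :=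
  if_neg hw

lemma dot_le_support (haOf : IsDirMap μ aOf) {a : ℝ × ℝ} (ha : jumpGF μ a ≤ 1)
    (w : ℝ × ℝ) : dot a w ≤ support aOf w := by
  rcases eq_or_ne w 0 with rfl | hw
  · simp [support, dot_zero_right]
  rw [support_of_ne_zero hw]
  rcases eq_or_ne a (aOf w) with rfl | hne
  · exact le_rfl
  · exact ((haOf w hw).2 a ha hne).le

lemma exists_support_eq_dot (haOf : IsDirMap μ aOf) (w : ℝ × ℝ) :
    ∃ a, jumpGF μ a ≤ 1 ∧ support aOf w = dot a w := by
  rcases eq_or_ne w 0 with rfl | hw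
  · have he : ((1 : ℝ), (0 : ℝ)) ≠ 0 := by simp
    exact ⟨_, (haOf _ he).1.le, by simp [support, dot_zero_right]⟩
  · exact ⟨aOf w, (haOf w hw).1.le, support_of_ne_zero hw⟩

lemma support_add_le (haOf : IsDirMap μ aOf) (x y : ℝ × ℝ) :
    support aOf (x + y) ≤ support aOf x + support aOf y := by
  obtain ⟨a, ha, h⟩ := exists_support_eq_dot haOf (x + y)
  rw [h, dot_add_right]
  exact add_le_add (dot_le_support haOf ha x) (dot_le_support haOf ha y)

lemma support_smul (haOf : IsDirMap μ aOf) {t : ℝ} (ht : 0 ≤ t) (w : ℝ × ℝ) :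
    support aOf (t • w) = t * support aOf w := by
  obtain ⟨a, ha, h⟩ := exists_support_eq_dot haOf (t • w)
  obtain ⟨b, hb, h'⟩ := exists_support_eq_dot haOf w
  refine le_antisymm ?_ ?_
  · rw [h, dot_smul_right]
    exact mul_le_mul_of_nonneg_left (dot_le_support haOf ha w) ht
  · rw [h', ← dot_smul_right]
    exact dot_le_support haOf hb _

lemma convexOn_support (haOf : IsDirMap μ aOf) : ConvexOn ℝ Set.univ (support aOf) := by
  refine ⟨convex_univ, fun x _ y _ s t hs ht _ => ?_⟩
  obtain ⟨a, ha, h⟩ := exists_support_eq_dot haOf (s • x + t • y)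
  rw [h, dot_add_right, dot_smul_right, dot_smul_right, smul_eq_mul, smul_eq_mul]
  exact add_le_add (mul_le_mul_of_nonneg_left (dot_le_support haOf ha x) hs)
    (mul_le_mul_of_nonneg_left (dot_le_support haOf ha y) ht)

lemma continuous_support (haOf : IsDirMap μ aOf) : Continuous (support aOf) :=
  continuousOn_univ.1 ((convexOn_support haOf).continuousOn isOpen_univ)

lemma support_add_support_neg_pos (hprob : ∑' z : ℤ × ℤ, μ z = 1) (h1 : H1 μ) (h3 : H3 μ)
    (haOf : IsDirMap μ aOf) {u : ℝ × ℝ} (hu : u ≠ 0) :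
    0 < support aOf u + support aOf (-u) := by
  obtain ⟨b, hb⟩ := exists_phiR_lt_one hprob h1 h3
  have hbD : jumpGF μ b ≤ 1 := (jumpGF_le_one_iff h3 b).2 hb.le
  have hb_ne (w : ℝ × ℝ) (hw : w ≠ 0) : b ≠ aOf w := by
    rintro rfl
    exact hb.ne ((jumpGF_eq_one_iff h3 _).1 (haOf w hw).1)
  have hneg : -u ≠ 0 := neg_ne_zero.2 hu
  have h₁ := (haOf u hu).2 b hbD (hb_ne u hu)
  have h₂ := (haOf (-u) hneg).2 b hbD (hb_ne _ hneg)
  rw [← support_of_ne_zero hu] at h₁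
  rw [← support_of_ne_zero hneg, dot_neg_right] at h₂
  linarith

lemma exists_pos_mul_norE_le_support_add_support_neg (hprob : ∑' z : ℤ × ℤ, μ z = 1)
    (h1 : H1 μ) (h3 : H3 μ) (haOf : IsDirMap μ aOf) :
    ∃ c₀ : ℝ, 0 < c₀ ∧ ∀ w, c₀ * norE w ≤ support aOf w + support aOf (-w) :=
  exists_pos_mul_norE_le (f := fun w => support aOf w + support aOf (-w))
    ((continuous_support haOf).add ((continuous_support haOf).comp continuous_neg))
    (fun t ht w => by simp only [← smul_neg, support_smul haOf ht, mul_add])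
    fun _ hu => support_add_support_neg_pos hprob h1 h3 haOf hu

end Support

section NormalCone

variable {μ : ℤ × ℤ → ℝ≥0∞} {aOf : ℝ × ℝ → ℝ × ℝ}

lemma gradPhi_ne_zero (hprob : ∑' z : ℤ × ℤ, μ z = 1) (h1 : H1 μ) (h3 : H3 μ) {a : ℝ × ℝ}
    (ha : phiR μ a = 1) : gradPhi μ a ≠ 0 := by
  obtain ⟨b, hb⟩ := exists_phiR_lt_one hprob h1 h3
  intro h0
  have := phiR_add_dot_gradPhi_le h3 a (b - a)
  rw [h0, dot_zero_right, ha, add_sub_cancel] at this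
  linarith

lemma dot_neg_of_dot_gradPhi_neg (h3 : H3 μ) (haOf : IsDirMap μ aOf) {u v : ℝ × ℝ}
    (hu : u ≠ 0) (hv : dot v (gradPhi μ (aOf u)) < 0) : dot v u < 0 := by
  obtain ⟨t, ht, hlt⟩ := exists_phiR_lt_of_dot_gradPhi_neg h3 hv
  have hD : jumpGF μ (aOf u + t • v) ≤ 1 := by
    rw [jumpGF_le_one_iff h3]
    exact hlt.le.trans ((jumpGF_eq_one_iff h3 _).1 (haOf u hu).1).le
  have hne : aOf u + t • v ≠ aOf u := fun h => hlt.ne (by rw [h])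
  have := (haOf u hu).2 _ hD hne
  rw [dot_add_left, dot_smul_left] at this
  exact neg_of_mul_neg_right (by linarith) ht.le

lemma exists_pos_smul_gradPhi (hprob : ∑' z : ℤ × ℤ, μ z = 1) (h1 : H1 μ) (h3 : H3 μ)
    (haOf : IsDirMap μ aOf) {u : ℝ × ℝ} (hu : u ≠ 0) :
    ∃ c : ℝ, 0 < c ∧ u = c • gradPhi μ (aOf u) :=
  exists_pos_smul_of_dot_neg
    (gradPhi_ne_zero hprob h1 h3 ((jumpGF_eq_one_iff h3 _).1 (haOf u hu).1))
    fun _ hv => dot_neg_of_dot_gradPhi_neg h3 haOf hu hv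

lemma exists_pos_smul_of_aOf_eq (hprob : ∑' z : ℤ × ℤ, μ z = 1) (h1 : H1 μ) (h3 : H3 μ)
    (haOf : IsDirMap μ aOf) {q w : ℝ × ℝ} (hq : q ≠ 0) (hw : w ≠ 0) (h : aOf w = aOf q) :
    ∃ θ : ℝ, 0 < θ ∧ w = θ • q := by
  obtain ⟨cw, hcw, hw'⟩ := exists_pos_smul_gradPhi hprob h1 h3 haOf hw
  obtain ⟨cq, hcq, hq'⟩ := exists_pos_smul_gradPhi hprob h1 h3 haOf hq
  refine ⟨cw / cq, div_pos hcw hcq, ?_⟩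
  rw [hw', hq', h, smul_smul, div_mul_cancel₀ _ hcq.ne']

lemma support_lt_support_add_support (hprob : ∑' z : ℤ × ℤ, μ z = 1) (h1 : H1 μ)
    (h3 : H3 μ) (haOf : IsDirMap μ aOf) {q w : ℝ × ℝ} (hq : q ≠ 0) (hw : w ≠ 0)
    (hray : ∀ θ : ℝ, 0 < θ → w ≠ θ • q) :
    support aOf q < support aOf w + support aOf (q - w) := by
  by_contra! hle
  have hD := (haOf q hq).1.le
  have hsplit : dot (aOf q) w + dot (aOf q) (q - w) = support aOf q := by
    rw [← dot_add_right, add_sub_cancel, support_of_ne_zero hq]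
  have heq : dot (aOf q) w = dot (aOf w) w := by
    rw [← support_of_ne_zero hw]
    linarith [dot_le_support haOf hD w, dot_le_support haOf hD (q - w)]
  have haw : aOf w = aOf q := by
    by_contra hne
    exact ((haOf w hw).2 _ hD (Ne.symm hne)).ne heq
  obtain ⟨θ, hθ, hθw⟩ := exists_pos_smul_of_aOf_eq hprob h1 h3 haOf hq hw haw
  exact hray θ hθ hθw

end NormalCone

/-- **Lemma 6.1.**  Under (H1) and (H3), for any `q ∈ 𝒮²₊` and `δ > 0`, there is a
small `ε > 0` such that `inf { λ_ε(q,w) : inf_{θ>0} |w − θq| ≥ δ } > a(q)·q`, where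
`λ_ε(q,w) = a(w)·w + a(q−w)·(q−w) − ε|w|`. -/
theorem lamEps_inf_above
    (μ : ℤ × ℤ → ℝ≥0∞) (hprob : ∑' z : ℤ × ℤ, μ z = 1)
    (h1 : H1 μ) (h3 : H3 μ)
    (aOf : ℝ × ℝ → ℝ × ℝ) (haOf : IsDirMap μ aOf) :
    ∀ q ∈ Spos, ∀ δ : ℝ, 0 < δ →
      ∃ ε : ℝ, 0 < ε ∧ ∃ c : ℝ, dot (aOf q) q < c ∧
        ∀ w : ℝ × ℝ, (∀ θ : ℝ, 0 < θ → δ ≤ norE (w - θ • q)) →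
          c ≤ lamEps aOf ε q w := by
  rintro q ⟨-, -, hq⟩ δ hδ
  have hq0 : q ≠ 0 := by
    rintro rfl
    simp [norE] at hq
  obtain ⟨c₀, hc₀, hgrowth⟩ := exists_pos_mul_norE_le_support_add_support_neg hprob h1 h3 haOf
  have hs := continuous_support haOf
  rw [← support_of_ne_zero hq0]
  refine exists_gap_sub_mul_of_coercive (F := fun w => support aOf w + support aOf (q - w))
    (isClosed_setOf_le_norE_sub q δ) (hs.add (hs.comp (continuous_sub_left q))).continuousOn
    isCompact_norE_le hc₀ (fun w hw => ?_) (C := support aOf (-q)) fun w hw => ?_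
  · obtain ⟨hw0, hray⟩ := ne_zero_and_ne_smul_of_le_norE_sub hq hδ hw
    exact support_lt_support_add_support hprob h1 h3 haOf hq0 hw0 hray
  · have := support_add_le haOf (q - w) (-q)
    rw [show q - w + -q = -w by abel] at this
    linarith [hgrowth w]

end KRWQ
end

section
/- Under hypothesis (H1), the greatest common divisor of the set of all integers k > 0 for which inf_{z ∈ ℤ×ℕ*} P_z(Z₊¹(k) = z) > 0 is equal to the period k̂ of the random walk (S(t)), i.e. to the greatest common divisor of {k > 0 : P₀(S(k) = 0) > 0}. -/
open scoped ENNReal Classical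
open Filter

namespace KRWQ

/-!
A loop of positive probability, started at the step after which its height is minimal
(cycle lemma), never goes below its starting height. Run from any point of `ℤ × ℕ*` it
therefore stays in the half plane, with a probability independent of the point. So for
every `k`, `inf_z P_z(Z₊¹(k) = z) > 0` exactly when `P₀(S(k) = 0) > 0`: the two sets of
return times, hence their gcds, coincide.
-/

theorem _root_.List.exists_rotate_sum_take_nonneg {α : Type*} [AddCommGroup α] [LinearOrder α]
    [IsOrderedAddMonoid α] (l : List α) (hl : l.sum = 0) :
    ∃ n, ∀ j, 0 ≤ ((l.rotate n).take j).sum := by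
  obtain ⟨i, hi, hmin⟩ := (Finset.range (l.length + 1)).exists_min_image
    (fun j => (l.take j).sum) ⟨0, by simp⟩
  replace hi : i ≤ l.length := Nat.lt_succ_iff.1 (Finset.mem_range.1 hi)
  have hmin' (j : ℕ) : (l.take i).sum ≤ (l.take j).sum := by
    rcases le_or_gt j l.length with hj | hj
    · exact hmin j (Finset.mem_range.2 (Nat.lt_succ_of_le hj))
    · simpa [List.take_of_length_le hj.le] using hmin l.length (by simp)
  refine ⟨i, fun j => ?_⟩
  have hdrop : ((l.drop i).take j).sum = (l.take (i + j)).sum - (l.take i).sum := by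
    rw [List.take_add, List.sum_append, add_sub_cancel_left]
  rw [List.rotate_eq_drop_append_take hi, List.take_append, List.sum_append, List.take_take,
    hdrop, List.length_drop]
  rcases le_or_gt j (l.length - i) with hj | hj
  · rw [Nat.sub_eq_zero_of_le hj, Nat.zero_min, List.take_zero, List.sum_nil, add_zero]
    exact sub_nonneg.2 (hmin' _)
  · rw [List.take_of_length_le (by omega), hl, zero_sub, neg_add_eq_sub]
    exact sub_nonneg.2 (hmin' _)

theorem _root_.ENNReal.prod_map_pos {ι : Type*} (f : ι → ℝ≥0∞) {l : List ι}
    (h : ∀ a ∈ l, 0 < f a) : 0 < (l.map f).prod :=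
  pos_iff_ne_zero.2 <| List.prod_ne_zero <| by simpa [eq_comm] using fun a ha => (h a ha).ne'

section Paths

variable {G : Type*} [AddCommGroup G] (μ : G → ℝ≥0∞)

theorem nstepK_univ : nstepK μ Set.univ = nstep μ := by
  ext n z z'
  induction n generalizing z' with
  | zero => rfl
  | succ n ih => simp only [nstepK, nstep, Set.indicator_univ, ih]

theorem nstepK_mono {A B : Set G} (hAB : A ⊆ B) (n : ℕ) (z z' : G) :
    nstepK μ A n z z' ≤ nstepK μ B n z z' := by
  induction n generalizing z' with
  | zero => rfl
  | succ n ih =>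
    refine (Set.indicator_le_indicator_of_subset hAB (fun _ => zero_le) z').trans ?_
    exact Set.indicator_le_indicator (ENNReal.tsum_le_tsum fun w => mul_le_mul_left (ih w) _)

theorem nstepK_le_nstep (A : Set G) (n : ℕ) (z z' : G) : nstepK μ A n z z' ≤ nstep μ n z z' :=
  nstepK_univ μ ▸ nstepK_mono μ (Set.subset_univ A) n z z'

theorem prod_map_le_nstepK (A : Set G) (l : List G) (z : G)
    (hA : ∀ j, z + (l.take j).sum ∈ A) :
    (l.map μ).prod ≤ nstepK μ A l.length z (z + l.sum) := by
  induction l using List.reverseRecOn with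
  | nil => simp [nstepK]
  | append_singleton l a ih =>
    have hend : z + (l ++ [a]).sum ∈ A := by simpa using hA (l.length + 1)
    have hl : ∀ j, z + (l.take j).sum ∈ A := fun j => by
      rcases le_or_gt j l.length with hj | hj
      · simpa [List.take_append_of_le_length hj] using hA j
      · simpa [List.take_of_length_le hj.le] using hA l.length
    rw [List.length_append, List.length_singleton, nstepK, Set.indicator_of_mem hend,
      List.map_append, List.prod_append, List.map_singleton, List.prod_singleton]
    refine le_trans ?_ (ENNReal.le_tsum (z + l.sum))
    rw [List.sum_append, List.sum_singleton, ← add_assoc, add_sub_cancel_left]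
    exact mul_le_mul_left (ih hl) _

theorem exists_path_of_nstep_pos {n : ℕ} {z z' : G} (h : 0 < nstep μ n z z') :
    ∃ l : List G, l.length = n ∧ (∀ a ∈ l, 0 < μ a) ∧ z + l.sum = z' := by
  induction n generalizing z' with
  | zero =>
    have : z' = z := by
      by_contra hne
      simp [nstep, hne] at h
    exact ⟨[], rfl, by simp, by simp [this]⟩
  | succ n ih =>
    obtain ⟨w, hw⟩ : ∃ w, nstep μ n z w * μ (z' - w) ≠ 0 := by
      by_contra! h0
      exact h.ne' (ENNReal.tsum_eq_zero.2 h0)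
    obtain ⟨l, rfl, hpos, rfl⟩ := ih (pos_iff_ne_zero.2 (left_ne_zero_of_mul hw))
    refine ⟨l ++ [z' - (z + l.sum)], by simp, ?_, by simp; abel⟩
    simpa [or_imp, forall_and, pos_iff_ne_zero] using
      ⟨fun a ha => (hpos a ha).ne', right_ne_zero_of_mul hw⟩

theorem nstep_pos_iff_exists_path {n : ℕ} {z z' : G} :
    0 < nstep μ n z z' ↔ ∃ l : List G, l.length = n ∧ (∀ a ∈ l, 0 < μ a) ∧ z + l.sum = z' := by
  refine ⟨exists_path_of_nstep_pos μ, ?_⟩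
  rintro ⟨l, rfl, hpos, rfl⟩
  refine (ENNReal.prod_map_pos μ hpos).trans_le ?_
  simpa [nstepK_univ] using prod_map_le_nstepK μ Set.univ l z (fun _ => trivial)

end Paths

theorem prod_map_le_iInf_nstepK_upperHalf (μ : ℤ × ℤ → ℝ≥0∞) (l : List (ℤ × ℤ))
    (hl : l.sum = 0) :
    (l.map μ).prod ≤ ⨅ z : {z : ℤ × ℤ // 0 < z.2}, nstepK μ upperHalf l.length z.1 z.1 := by
  have hsnd (l' : List (ℤ × ℤ)) : l'.sum.2 = (l'.map Prod.snd).sum :=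
    map_list_sum (AddMonoidHom.snd ℤ ℤ) l'
  obtain ⟨n, hn⟩ := (l.map Prod.snd).exists_rotate_sum_take_nonneg (by rw [← hsnd, hl]; rfl)
  have hperm : (l.rotate n).Perm l := List.rotate_perm l n
  refine le_iInf fun z => ?_
  have hstay (j : ℕ) : z.1 + ((l.rotate n).take j).sum ∈ upperHalf := by
    have := hn j
    rw [← List.map_rotate, ← List.map_take, ← hsnd] at this
    exact add_pos_of_pos_of_nonneg z.2 this
  simpa [((l.map μ).rotate_perm n).prod_eq, hperm.length_eq, hperm.sum_eq, hl] using
    prod_map_le_nstepK μ upperHalf (l.rotate n) z.1 hstay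

theorem iInf_nstepK_upperHalf_pos_iff (μ : ℤ × ℤ → ℝ≥0∞) (k : ℕ) :
    0 < ⨅ z : {z : ℤ × ℤ // 0 < z.2}, nstepK μ upperHalf k z.1 z.1 ↔
      0 < nstep μ k (0 : ℤ × ℤ) 0 := by
  constructor
  · intro h
    have hret : 0 < nstep μ k ((0 : ℤ), (1 : ℤ)) ((0 : ℤ), (1 : ℤ)) :=
      (h.trans_le (iInf_le _ ⟨(0, 1), one_pos⟩)).trans_le (nstepK_le_nstep μ _ k _ _)
    obtain ⟨l, hlen, hpos, hsum⟩ := (nstep_pos_iff_exists_path μ).1 hret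
    exact (nstep_pos_iff_exists_path μ).2 ⟨l, hlen, hpos, by simpa using hsum⟩
  · intro h
    obtain ⟨l, rfl, hpos, hsum⟩ := (nstep_pos_iff_exists_path μ).1 h
    exact (ENNReal.prod_map_pos μ hpos).trans_le
      (prod_map_le_iInf_nstepK_upperHalf μ l (by simpa using hsum))

theorem killed_halfplane_period_general
    (μ : ℤ × ℤ → ℝ≥0∞) :
    ∀ d : ℕ,
      IsGcdOfSet
        {k : ℕ | 0 < k ∧
          0 < ⨅ z : {z : ℤ × ℤ // 0 < z.2}, nstepK μ upperHalf k z.1 z.1} d ↔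
      IsGcdOfSet {k : ℕ | 0 < k ∧ 0 < nstep μ k (0 : ℤ × ℤ) 0} d := by
  simp only [iInf_nstepK_upperHalf_pos_iff, implies_true]

/-- **Lemma 7.1.**  Under (H1), the greatest common divisor of the set of all integers
`k > 0` for which `inf_{z ∈ ℤ×ℕ*} P_z(Z₊¹(k) = z) > 0` is equal to the period `k̂` of
the random walk `S`, i.e. to the gcd of `{k > 0 : P₀(S(k) = 0) > 0}`. -/
theorem killed_halfplane_period
    (μ : ℤ × ℤ → ℝ≥0∞) (hprob : ∑' z : ℤ × ℤ, μ z = 1)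
    (h1 : H1 μ) :
    ∀ d : ℕ,
      IsGcdOfSet
        {k : ℕ | 0 < k ∧
          0 < ⨅ z : {z : ℤ × ℤ // 0 < z.2}, nstepK μ upperHalf k z.1 z.1} d ↔
      IsGcdOfSet {k : ℕ | 0 < k ∧ 0 < nstep μ k (0 : ℤ × ℤ) 0} d :=
  killed_halfplane_period_general μ

end KRWQ
end

section
/- Let (ξ(t)) be an irreducible homogeneous random walk on ℤ with zero mean and finite variance. Set T₀ = inf{t ≥ 0 : ξ(t) ≤ 0} and T = inf{t ≥ 0 : ξ(t) = ξ(0) + 1}. Then lim_{n→∞} P_n(T < T₀) = 1. -/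
open scoped ENNReal Classical
open Filter

namespace KRWQ

/-!
After translating by `n`, `P_n(T < T₀)` is the probability that the walk started at `0` first
leaves `{y > -n, y ≠ 1}` at the point `1`. These sets increase to `{1}ᶜ` and exit probabilities
are continuous along increasing unions, so the limit is the probability that the walk from `0`
ever hits `1`.

That probability is `1` because the walk is recurrent. By Chebyshev, for an integer `c > 2σ²`,
`S(t)` lies in `[-ck, ck]` with probability at least `1/2` for every `t < k²`; summing over `t` and using
`G(0, x) ≤ G(0, 0)` gives `k² ≤ 6ck · G(0, 0)` for all `k`, so `G(0, 0) = ∞`. The renewal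
inequality `G ≤ 1 + F · G` for partial sums then forces the return probability `F` to be `1`,
and irreducibility propagates this to the hitting probability of `1` from every point.
-/

theorem sum_range_sum_range_succ_mul_le (a b : ℕ → ℝ≥0∞) (K : ℕ) :
    ∑ n ∈ Finset.range K, ∑ m ∈ Finset.range (n + 1), a m * b (n - m) ≤
      (∑' m, a m) * ∑ j ∈ Finset.range K, b j := by
  calc ∑ n ∈ Finset.range K, ∑ m ∈ Finset.range (n + 1), a m * b (n - m)
      = ∑ m ∈ Finset.range K, a m * ∑ j ∈ Finset.range (K - m), b j := by
        simp only [Finset.range_eq_Ico, ← Finset.sum_Ico_Ico_comm, Finset.mul_sum]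
        refine Finset.sum_congr rfl fun m _ => ?_
        simp [Finset.sum_Ico_eq_sum_range]
    _ ≤ ∑ m ∈ Finset.range K, a m * ∑ j ∈ Finset.range K, b j := by
        gcongr with m
        exact Nat.sub_le K m
    _ ≤ (∑' m, a m) * ∑ j ∈ Finset.range K, b j := by
        rw [← Finset.sum_mul]
        gcongr
        exact ENNReal.sum_le_tsum _

theorem le_inv_one_sub_of_le_one_add_mul {x r : ℝ≥0∞} (hx : x ≠ ⊤)
    (h : x ≤ 1 + r * x) : x ≤ (1 - r)⁻¹ := by
  rw [ENNReal.le_inv_iff_mul_le, mul_comm, ENNReal.sub_mul fun _ _ => hx, one_mul,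
    tsub_le_iff_left, add_comm]
  exact h

theorem tsum_iSup_of_monotone {α : Type*} {f : ℕ → α → ℝ≥0∞} (hf : Monotone f) :
    ∑' a, ⨆ n, f n a = ⨆ n, ∑' a, f n a := by
  simp only [ENNReal.tsum_eq_iSup_sum]
  rw [iSup_comm]
  exact iSup_congr fun s => ENNReal.finsetSum_iSup_of_monotone fun a _ _ h => hf h a

section Kernel

variable {G : Type*} [AddCommGroup G] {μ : G → ℝ≥0∞} {A : Set G}

theorem nstep_eq_nstepK_univ (n : ℕ) (z z' : G) :
    nstep μ n z z' = nstepK μ Set.univ n z z' := by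
  induction n generalizing z' with
  | zero => rfl
  | succ n ih => simp [nstep, nstepK, ih]

theorem nstepK_mono_set {B : Set G} (h : A ⊆ B) (n : ℕ) (z z' : G) :
    nstepK μ A n z z' ≤ nstepK μ B n z z' := by
  induction n generalizing z' with
  | zero => rfl
  | succ n ih =>
    by_cases hz' : z' ∈ A
    · simp only [nstepK, Set.indicator_of_mem hz', Set.indicator_of_mem (h hz')]
      exact ENNReal.tsum_le_tsum fun w => by gcongr; exact ih w
    · simp [nstepK, hz']

theorem nstepK_add (m n : ℕ) (z z' : G) :
    nstepK μ A (m + n) z z' = ∑' v, nstepK μ A m z v * nstepK μ A n v z' := by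
  induction n generalizing z' with
  | zero =>
    rw [add_zero, tsum_eq_single z' fun v hv => by simp [nstepK, Ne.symm hv]]
    simp [nstepK]
  | succ n ih =>
    by_cases hz' : z' ∈ A
    · rw [← add_assoc]
      simp only [nstepK, Set.indicator_of_mem hz', ih, ← ENNReal.tsum_mul_right,
        ← ENNReal.tsum_mul_left, mul_assoc]
      exact ENNReal.tsum_comm
    · rw [← add_assoc]
      simp [nstepK, hz']

theorem nstepK_add_right (c : G) (n : ℕ) (z z' : G) :
    nstepK μ A n (z + c) (z' + c) = nstepK μ ((· + c) ⁻¹' A) n z z' := by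
  induction n generalizing z' with
  | zero => simp [nstepK]
  | succ n ih =>
    simp only [nstepK, Set.indicator_apply, Set.mem_preimage]
    congr 1
    rw [← (Equiv.addRight c).tsum_eq]
    simp [ih]

theorem nstep_add_right (c : G) (n : ℕ) (z z' : G) :
    nstep μ n (z + c) (z' + c) = nstep μ n z z' := by
  simp [nstep_eq_nstepK_univ, nstepK_add_right]

theorem exitK_add_right (c : G) (z w : G) :
    exitK μ A (z + c) (w + c) = exitK μ ((· + c) ⁻¹' A) z w := by
  simp only [exitK, Set.indicator_apply, Set.mem_compl_iff, Set.mem_preimage]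
  congr 1
  refine tsum_congr fun n => ?_
  rw [← (Equiv.addRight c).tsum_eq]
  simp [nstepK_add_right]

theorem exitK_of_notMem {w : G} (hw : w ∉ A) (z : G) :
    exitK μ A z w = ∑' n, ∑' v, nstepK μ A n z v * μ (w - v) :=
  Set.indicator_of_mem hw _

theorem exitK_mono_set {B : Set G} (h : A ⊆ B) {w : G} (hw : w ∉ B) (z : G) :
    exitK μ A z w ≤ exitK μ B z w := by
  rw [exitK_of_notMem hw, exitK_of_notMem fun hA => hw (h hA)]
  exact ENNReal.tsum_le_tsum fun n => ENNReal.tsum_le_tsum fun v => by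
    gcongr; exact nstepK_mono_set h n z v

/-- `exitAt μ A m z u = P_z(τ = m + 1, S(τ) = u)`, where `τ` is the first exit time from `A`
(note the shift: `m` counts the steps taken inside `A`). -/
noncomputable def exitAt (μ : G → ℝ≥0∞) (A : Set G) (m : ℕ) (z u : G) : ℝ≥0∞ :=
  Aᶜ.indicator (fun u => ∑' v, nstepK μ A m z v * μ (u - v)) u

theorem exitK_eq_tsum_exitAt (z w : G) : exitK μ A z w = ∑' m, exitAt μ A m z w := by
  by_cases hw : w ∈ Aᶜ <;>
    simp [exitK, exitAt, Set.indicator_of_mem, Set.indicator_of_notMem, hw]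

theorem exitAt_add (n k : ℕ) (z u : G) :
    exitAt μ A (n + k) z u = ∑' w, nstepK μ A n z w * exitAt μ A k w u := by
  by_cases hu : u ∈ Aᶜ
  · simp only [exitAt, Set.indicator_of_mem hu, nstepK_add, ← ENNReal.tsum_mul_right,
      ← ENNReal.tsum_mul_left, mul_assoc]
    exact ENNReal.tsum_comm
  · simp [exitAt, hu]

theorem tsum_nstepK_add_sum_exitAt (hμ : ∑' x, μ x = 1) (n : ℕ) (z : G) :
    ∑' v, nstepK μ A n z v + ∑ m ∈ Finset.range n, ∑' u, exitAt μ A m z u = 1 := by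
  induction n with
  | zero => simp [nstepK]
  | succ n ih =>
    have hstep : ∑' v, nstepK μ A (n + 1) z v + ∑' u, exitAt μ A n z u
        = ∑' v, nstepK μ A n z v := by
      have hμv (v : G) : ∑' u, μ (u - v) = 1 := by
        rw [← hμ]; exact (Equiv.subRight v).tsum_eq μ
      simp only [nstepK, exitAt, ← ENNReal.tsum_add, Set.indicator_self_add_compl_apply]
      rw [ENNReal.tsum_comm]
      simp [ENNReal.tsum_mul_left, hμv]
    rw [← ih, ← hstep, Finset.sum_range_succ]
    ring

theorem tsum_nstep (hμ : ∑' x, μ x = 1) (n : ℕ) (z : G) : ∑' v, nstep μ n z v = 1 := by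
  simpa [nstep_eq_nstepK_univ, exitAt] using tsum_nstepK_add_sum_exitAt (A := Set.univ) hμ n z

theorem tsum_exitK_le_one (hμ : ∑' x, μ x = 1) (z : G) : ∑' u, exitK μ A z u ≤ 1 := by
  simp only [exitK_eq_tsum_exitAt]
  rw [ENNReal.tsum_comm, ENNReal.tsum_eq_iSup_nat]
  exact iSup_le fun n => le_add_self.trans (tsum_nstepK_add_sum_exitAt hμ n z).le

theorem exitK_le_one (hμ : ∑' x, μ x = 1) (z w : G) : exitK μ A z w ≤ 1 :=
  (ENNReal.le_tsum w).trans (tsum_exitK_le_one hμ z)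

theorem exitK_eq_sum_exitAt_add_tsum (n : ℕ) (z u : G) :
    exitK μ A z u =
      ∑ m ∈ Finset.range n, exitAt μ A m z u + ∑' w, nstepK μ A n z w * exitK μ A w u := by
  simp only [exitK_eq_tsum_exitAt, ← ENNReal.tsum_mul_left]
  rw [← ENNReal.summable.sum_add_tsum_nat_add' (k := n), ENNReal.tsum_comm]
  simp [add_comm _ n, exitAt_add]

/-- By the Markov property at time `n` and conservation of mass, all the mass still alive at
time `n` sits at points from which exit is certain. -/
theorem tsum_exitK_eq_one_of_nstepK_pos (hμ : ∑' x, μ x = 1) {n : ℕ} {z w : G}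
    (hz : ∑' u, exitK μ A z u = 1) (hw : 0 < nstepK μ A n z w) :
    ∑' u, exitK μ A w u = 1 := by
  set E : G → ℝ≥0∞ := fun v => ∑' u, exitK μ A v u
  set S := ∑ m ∈ Finset.range n, ∑' u, exitAt μ A m z u
  have hmarkov : E z = S + ∑' v, nstepK μ A n z v * E v := by
    simp only [E, exitK_eq_sum_exitAt_add_tsum (A := A) n z, ENNReal.tsum_add,
      ← ENNReal.tsum_mul_left]
    rw [ENNReal.tsum_comm (f := fun v u => _), Summable.tsum_finsetSum fun _ _ => ENNReal.summable]
  have hmass := tsum_nstepK_add_sum_exitAt (A := A) hμ n z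
  have hS : S ≠ ⊤ := ne_top_of_le_ne_top ENNReal.one_ne_top (le_add_self.trans hmass.le)
  have hfin : ∑' v, nstepK μ A n z v ≠ ⊤ :=
    ne_top_of_le_ne_top ENNReal.one_ne_top (le_self_add.trans hmass.le)
  have hkilled : ∑' v, nstepK μ A n z v * E v = ∑' v, nstepK μ A n z v := by
    refine (ENNReal.add_right_inj hS).1 ?_
    rw [← hmarkov, show E z = 1 from hz, add_comm, hmass]
  by_contra hne
  have hlt : ∑' v, nstepK μ A n z v * E v < ∑' v, nstepK μ A n z v :=
    ENNReal.tsum_lt_tsum (hkilled ▸ hfin)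
      (fun v => mul_le_of_le_one_right' (tsum_exitK_le_one hμ v))
      (by simpa using ENNReal.mul_lt_mul_right hw.ne' (ne_top_of_le_ne_top hfin
        (ENNReal.le_tsum w)) (lt_of_le_of_ne (tsum_exitK_le_one hμ w) hne))
  exact hlt.ne hkilled

theorem tsum_exitK_compl_singleton (z p : G) : ∑' u, exitK μ {p}ᶜ z u = exitK μ {p}ᶜ z p :=
  tsum_eq_single p fun u hu => by simp [exitK, hu]

theorem exists_nstepK_compl_singleton_pos {n : ℕ} {p x : G} (h : 0 < nstep μ n p x) :
    ∃ m, 0 < nstepK μ {p}ᶜ m p x := by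
  induction n generalizing x with
  | zero => exact ⟨0, by simpa [nstep, nstepK] using h⟩
  | succ n ih =>
    obtain ⟨w, hw⟩ : ∃ w, nstep μ n p w * μ (x - w) ≠ 0 := by
      by_contra! hzero
      exact h.ne' (ENNReal.tsum_eq_zero.2 hzero)
    obtain ⟨hpw, hxw⟩ := mul_ne_zero_iff.1 hw
    obtain ⟨m, hm⟩ := ih (pos_iff_ne_zero.2 hpw)
    by_cases hx : x = p
    · exact ⟨0, by simp [nstepK, hx]⟩
    refine ⟨m + 1, ?_⟩
    simp only [nstepK, Set.indicator_of_mem (Set.mem_compl_singleton_iff.2 hx)]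
    exact (ENNReal.mul_pos hm.ne' hxw).trans_le (ENNReal.le_tsum w)

theorem nstep_le_nstepK_add_sum_exitAt (n : ℕ) (z z' : G) :
    nstep μ n z z' ≤ nstepK μ A n z z' +
      ∑ m ∈ Finset.range n, ∑' u, exitAt μ A m z u * nstep μ (n - (m + 1)) u z' := by
  induction n generalizing z' with
  | zero => simp [nstep, nstepK]
  | succ n ih =>
    have hkilled : ∑' w, nstepK μ A n z w * μ (z' - w) =
        nstepK μ A (n + 1) z z' + exitAt μ A n z z' :=
      (Set.indicator_self_add_compl_apply A
        (fun u => ∑' w, nstepK μ A n z w * μ (u - w)) z').symm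
    have hexited : ∑' w, (∑ m ∈ Finset.range n,
          ∑' u, exitAt μ A m z u * nstep μ (n - (m + 1)) u w) * μ (z' - w) =
        ∑ m ∈ Finset.range n, ∑' u, exitAt μ A m z u * nstep μ (n + 1 - (m + 1)) u z' := by
      simp only [Finset.sum_mul]
      rw [Summable.tsum_finsetSum fun _ _ => ENNReal.summable]
      refine Finset.sum_congr rfl fun m hm => ?_
      rw [show n + 1 - (m + 1) = n - (m + 1) + 1 by grind]
      simp only [nstep, ← ENNReal.tsum_mul_right, ← ENNReal.tsum_mul_left, mul_assoc]
      exact ENNReal.tsum_comm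
    have hlast :
        ∑' u, exitAt μ A n z u * nstep μ (n + 1 - (n + 1)) u z' = exitAt μ A n z z' := by
      rw [tsum_eq_single z' fun u hu => by simp [nstep, Ne.symm hu]]
      simp [nstep]
    calc nstep μ (n + 1) z z' = ∑' w, nstep μ n z w * μ (z' - w) := rfl
      _ ≤ ∑' w, (nstepK μ A n z w + ∑ m ∈ Finset.range n,
            ∑' u, exitAt μ A m z u * nstep μ (n - (m + 1)) u w) * μ (z' - w) :=
        ENNReal.tsum_le_tsum fun w => by gcongr; exact ih w
      _ = _ := by
        rw [Finset.sum_range_succ, hlast]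
        simp only [add_mul, ENNReal.tsum_add, hkilled, hexited]
        ring

theorem nstep_succ_le_sum_exitAt_mul (n : ℕ) (z p : G) :
    nstep μ (n + 1) z p ≤
      ∑ m ∈ Finset.range (n + 1), exitAt μ {p}ᶜ m z p * nstep μ (n - m) p p := by
  have hpoint (m : ℕ) : ∑' u, exitAt μ {p}ᶜ m z u * nstep μ (n - m) u p =
      exitAt μ {p}ᶜ m z p * nstep μ (n - m) p p :=
    tsum_eq_single p fun u hu => by simp [exitAt, hu]
  simpa [nstepK, hpoint] using nstep_le_nstepK_add_sum_exitAt (μ := μ) (A := {p}ᶜ) (n + 1) z p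

theorem sum_range_succ_nstep_le (K : ℕ) (z p : G) :
    ∑ n ∈ Finset.range (K + 1), nstep μ n z p ≤
      nstep μ 0 z p + exitK μ {p}ᶜ z p * ∑ n ∈ Finset.range K, nstep μ n p p := by
  rw [Finset.sum_range_succ', add_comm, exitK_eq_tsum_exitAt]
  gcongr
  exact (Finset.sum_le_sum fun n _ => nstep_succ_le_sum_exitAt_mul n z p).trans
    (sum_range_sum_range_succ_mul_le _ _ K)

theorem green_add_right (c z z' : G) : green μ (z + c) (z' + c) = green μ z z' := by
  simp [green, nstep_add_right]

theorem green_le_green_self (hμ : ∑' x, μ x = 1) (z p : G) : green μ z p ≤ green μ p p := by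
  obtain rfl | hzp := eq_or_ne z p
  · rfl
  rw [green, ENNReal.tsum_eq_iSup_nat]
  refine iSup_le fun K => ?_
  calc ∑ n ∈ Finset.range K, nstep μ n z p
        ≤ ∑ n ∈ Finset.range (K + 1), nstep μ n z p :=
        Finset.sum_le_sum_of_subset (Finset.range_subset_range.2 K.le_succ)
    _ ≤ nstep μ 0 z p + exitK μ {p}ᶜ z p * ∑ n ∈ Finset.range K, nstep μ n p p :=
        sum_range_succ_nstep_le K z p
    _ ≤ 0 + 1 * green μ p p := by
        gcongr
        · simp [nstep, hzp.symm]
        · exact exitK_le_one hμ z p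
        · exact ENNReal.sum_le_tsum _
    _ = green μ p p := by simp

/-- If the return probability `F` were `< 1`, the partial sums `U` of the Green function,
which satisfy `U ≤ 1 + F U`, would stay below `(1 - F)⁻¹`. -/
theorem exitK_compl_singleton_self_eq_one (hμ : ∑' x, μ x = 1) {p : G}
    (hG : green μ p p = ⊤) : exitK μ {p}ᶜ p p = 1 := by
  set F := exitK μ {p}ᶜ p p
  refine le_antisymm (exitK_le_one hμ p p) (not_lt.1 fun hF => ?_)
  have hpartial (K : ℕ) : ∑ n ∈ Finset.range K, nstep μ n p p ≤ (1 - F)⁻¹ := by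
    refine le_inv_one_sub_of_le_one_add_mul (ENNReal.sum_ne_top.2 fun n _ =>
      ne_top_of_le_ne_top ENNReal.one_ne_top ((ENNReal.le_tsum p).trans (tsum_nstep hμ n p).le)) ?_
    calc ∑ n ∈ Finset.range K, nstep μ n p p
          ≤ ∑ n ∈ Finset.range (K + 1), nstep μ n p p :=
          Finset.sum_le_sum_of_subset (Finset.range_subset_range.2 K.le_succ)
      _ ≤ nstep μ 0 p p + F * ∑ n ∈ Finset.range K, nstep μ n p p :=
          sum_range_succ_nstep_le K p p
      _ = 1 + F * ∑ n ∈ Finset.range K, nstep μ n p p := by simp [nstep]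
  have hbound : green μ p p ≤ (1 - F)⁻¹ := by
    rw [green, ENNReal.tsum_eq_iSup_nat]
    exact iSup_le hpartial
  exact ENNReal.inv_ne_top.2 (tsub_pos_of_lt hF).ne' (top_le_iff.1 (hG ▸ hbound))

theorem exitK_compl_singleton_eq_one (hμ : ∑' x, μ x = 1)
    (hirr : ∀ z z' : G, ∃ n, 0 < nstep μ n z z') {p : G} (hG : green μ p p = ⊤) (z : G) :
    exitK μ {p}ᶜ z p = 1 := by
  obtain ⟨m, hm⟩ := exists_nstepK_compl_singleton_pos (hirr p z).choose_spec
  rw [← tsum_exitK_compl_singleton]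
  refine tsum_exitK_eq_one_of_nstepK_pos hμ ?_ hm
  rw [tsum_exitK_compl_singleton]
  exact exitK_compl_singleton_self_eq_one hμ hG

end Kernel

section Exhaustion

variable {G : Type*} [AddCommGroup G] {μ : G → ℝ≥0∞} {B : ℕ → Set G}

theorem nstepK_iUnion (hB : Monotone B) (k : ℕ) (z z' : G) :
    nstepK μ (⋃ i, B i) k z z' = ⨆ i, nstepK μ (B i) k z z' := by
  induction k generalizing z' with
  | zero => simp [nstepK]
  | succ k ih =>
    by_cases hz' : z' ∈ ⋃ i, B i
    · obtain ⟨j, hj⟩ := Set.mem_iUnion.1 hz'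
      have hmonoK : Monotone fun i => nstepK μ (B i) (k + 1) z z' :=
        fun i i' h => nstepK_mono_set (hB h) (k + 1) z z'
      have hmono : Monotone fun i => ∑' w, nstepK μ (B i) k z w * μ (z' - w) :=
        fun i i' h => ENNReal.tsum_le_tsum fun w => by gcongr; exact nstepK_mono_set (hB h) k z w
      calc nstepK μ (⋃ i, B i) (k + 1) z z'
          = ⨆ i, ∑' w, nstepK μ (B i) k z w * μ (z' - w) := by
            simp only [nstepK, Set.indicator_of_mem hz', ih, ENNReal.iSup_mul]
            exact tsum_iSup_of_monotone fun i i' h w => by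
              gcongr; exact nstepK_mono_set (hB h) k z w
        _ = ⨆ i, nstepK μ (B (i + j)) (k + 1) z z' := by
            rw [← hmono.iSup_nat_add j]
            simp only [nstepK, Set.indicator_of_mem (hB (Nat.le_add_left j _) hj)]
        _ = ⨆ i, nstepK μ (B i) (k + 1) z z' :=
            hmonoK.iSup_nat_add j
    · simp only [Set.mem_iUnion, not_exists] at hz'
      simp [nstepK, hz']

theorem exitK_iUnion (hB : Monotone B) {w : G} (hw : w ∉ ⋃ i, B i) (z : G) :
    exitK μ (⋃ i, B i) z w = ⨆ i, exitK μ (B i) z w := by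
  have hwB (i : ℕ) : w ∉ B i := fun hi => hw (Set.mem_iUnion.2 ⟨i, hi⟩)
  have hmono (n : ℕ) (v : G) : Monotone fun i => nstepK μ (B i) n z v * μ (w - v) :=
    fun i i' h => by dsimp only; gcongr; exact nstepK_mono_set (hB h) n z v
  simp only [exitK_of_notMem hw, exitK_of_notMem (hwB _), nstepK_iUnion hB, ENNReal.iSup_mul]
  rw [tsum_congr fun n => tsum_iSup_of_monotone fun i i' h v => hmono n v h]
  exact tsum_iSup_of_monotone fun i i' h n => ENNReal.tsum_le_tsum fun v => hmono n v h

theorem tendsto_exitK_iUnion (hB : Monotone B) {w : G} (hw : w ∉ ⋃ i, B i) (z : G) :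
    Tendsto (fun i => exitK μ (B i) z w) atTop (nhds (exitK μ (⋃ i, B i) z w)) := by
  have hwB (i : ℕ) : w ∉ B i := fun hi => hw (Set.mem_iUnion.2 ⟨i, hi⟩)
  rw [exitK_iUnion hB hw]
  exact tendsto_atTop_iSup fun i i' h => exitK_mono_set (hB h) (hwB i') z

end Exhaustion

section IntegerWalk

noncomputable def secondMoment (f : ℤ → ℝ≥0∞) : ℝ≥0∞ :=
  ∑' x, f x * ENNReal.ofReal ((x : ℝ) ^ 2)

theorem sq_mul_tsum_compl_Icc_le_secondMoment (f : ℤ → ℝ≥0∞) (a : ℕ) :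
    (a : ℝ≥0∞) ^ 2 * ∑' x : ↥(↑(Finset.Icc (-(a : ℤ)) a) : Set ℤ)ᶜ, f x ≤
      secondMoment f := by
  rw [← ENNReal.tsum_mul_left]
  refine le_trans (ENNReal.tsum_le_tsum fun x => ?_)
    (ENNReal.tsum_comp_le_tsum_of_injective Subtype.val_injective _)
  obtain ⟨x, hx⟩ := x
  have hax : (a : ℤ) < |x| := by
    simp only [Set.mem_compl_iff, Finset.coe_Icc, Set.mem_Icc] at hx
    grind
  have hsq : ((a : ℤ) : ℝ) ^ 2 ≤ (x : ℝ) ^ 2 := by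
    exact_mod_cast (by nlinarith [abs_nonneg x, sq_abs x] : (a : ℤ) ^ 2 ≤ x ^ 2)
  rw [mul_comm, ← ENNReal.ofReal_natCast, ← ENNReal.ofReal_pow (Nat.cast_nonneg a)]
  exact mul_le_mul' le_rfl (ENNReal.ofReal_le_ofReal (by exact_mod_cast hsq))

theorem one_le_two_mul_sum_Icc {f : ℤ → ℝ≥0∞} (hf : ∑' x, f x = 1) {a : ℕ}
    (ha : a ≠ 0) (hm : 2 * secondMoment f ≤ (a : ℝ≥0∞) ^ 2) :
    1 ≤ 2 * ∑ x ∈ Finset.Icc (-(a : ℤ)) a, f x := by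
  set near := ∑ x ∈ Finset.Icc (-(a : ℤ)) a, f x
  set far := ∑' x : ↥(↑(Finset.Icc (-(a : ℤ)) a) : Set ℤ)ᶜ, f x
  have hsplit : near + far = 1 := (ENNReal.sum_add_tsum_compl _ f).trans hf
  have hfar : 2 * far ≤ 1 := by
    have ha2 : (a : ℝ≥0∞) ^ 2 ≠ 0 := by simp [ha]
    refine (ENNReal.mul_le_mul_iff_right ha2 (by simp)).1 ?_
    calc (a : ℝ≥0∞) ^ 2 * (2 * far) = 2 * ((a : ℝ≥0∞) ^ 2 * far) := by ring
      _ ≤ 2 * secondMoment f := by gcongr; exact sq_mul_tsum_compl_Icc_le_secondMoment f a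
      _ ≤ (a : ℝ≥0∞) ^ 2 * 1 := by rw [mul_one]; exact hm
  refine (ENNReal.add_le_add_iff_right ENNReal.one_ne_top).1 ?_
  calc 1 + 1 = 2 * near + 2 * far := by rw [← mul_add, hsplit]; norm_num
    _ ≤ 2 * near + 1 := by gcongr

variable {ν : ℤ → ℝ≥0∞}

theorem summable_toReal_mul_sq (hvar : secondMoment ν < ⊤) :
    Summable fun w : ℤ => (ν w).toReal * (w : ℝ) ^ 2 := by
  refine (ENNReal.summable_toReal hvar.ne).congr fun w => ?_
  rw [ENNReal.toReal_mul, ENNReal.toReal_ofReal (sq_nonneg _)]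

theorem summable_mul_toReal (hvar : secondMoment ν < ⊤) :
    Summable fun w : ℤ => (w : ℝ) * (ν w).toReal := by
  refine (summable_toReal_mul_sq hvar).of_norm_bounded fun w => ?_
  have habs : |(w : ℝ)| ≤ (w : ℝ) ^ 2 := by
    exact_mod_cast (Int.abs_eq_natAbs w ▸ Int.natAbs_le_self_sq w : |w| ≤ w ^ 2)
  rw [Real.norm_eq_abs, abs_mul, abs_of_nonneg ENNReal.toReal_nonneg, mul_comm]
  exact mul_le_mul_of_nonneg_left habs ENNReal.toReal_nonneg

theorem tsum_mul_ofReal_add_sq (hprob : ∑' x, ν x = 1)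
    (hmean : ∑' x : ℤ, (x : ℝ) * (ν x).toReal = 0) (hvar : secondMoment ν < ⊤) (v : ℤ) :
    ∑' w, ν w * ENNReal.ofReal (((w + v : ℤ) : ℝ) ^ 2) =
      secondMoment ν + ENNReal.ofReal ((v : ℝ) ^ 2) := by
  have hfin (w : ℤ) : ν w ≠ ⊤ :=
    ne_top_of_le_ne_top ENNReal.one_ne_top (hprob ▸ ENNReal.le_tsum w)
  have h0 := (ENNReal.summable_toReal (hprob ▸ ENNReal.one_ne_top)).mul_left ((v : ℝ) ^ 2)
  have h1 := (summable_mul_toReal hvar).mul_left (2 * (v : ℝ))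
  have h2 := summable_toReal_mul_sq hvar
  have hexpand (w : ℤ) : (ν w).toReal * ((w + v : ℤ) : ℝ) ^ 2 =
      (ν w).toReal * (w : ℝ) ^ 2 + 2 * v * ((w : ℝ) * (ν w).toReal) +
        v ^ 2 * (ν w).toReal := by
    push_cast; ring
  have hσ : ∑' w, (ν w).toReal * (w : ℝ) ^ 2 = (secondMoment ν).toReal := by
    rw [secondMoment, ENNReal.tsum_toReal_eq fun w => ENNReal.mul_ne_top (hfin w) (by simp)]
    simp only [ENNReal.toReal_mul, ENNReal.toReal_ofReal (sq_nonneg _)]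
  have hone : ∑' w, (ν w).toReal = 1 := by
    rw [← ENNReal.tsum_toReal_eq hfin, hprob, ENNReal.toReal_one]
  have hreal :
      ∑' w, (ν w).toReal * ((w + v : ℤ) : ℝ) ^ 2 = (secondMoment ν).toReal + v ^ 2 := by
    rw [tsum_congr hexpand, (h2.add h1).tsum_add h0, h2.tsum_add h1, tsum_mul_left,
      tsum_mul_left, hmean, hσ, hone]
    ring
  have hofReal (w : ℤ) : ν w * ENNReal.ofReal (((w + v : ℤ) : ℝ) ^ 2) =
      ENNReal.ofReal ((ν w).toReal * ((w + v : ℤ) : ℝ) ^ 2) := by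
    rw [ENNReal.ofReal_mul ENNReal.toReal_nonneg, ENNReal.ofReal_toReal (hfin w)]
  rw [tsum_congr hofReal, ← ENNReal.ofReal_tsum_of_nonneg
      (fun w => mul_nonneg ENNReal.toReal_nonneg (sq_nonneg _))
      (((h2.add h1).add h0).congr fun w => (hexpand w).symm),
    hreal, ENNReal.ofReal_add ENNReal.toReal_nonneg (sq_nonneg _), ENNReal.ofReal_toReal hvar.ne]

theorem secondMoment_nstep (hprob : ∑' x, ν x = 1)
    (hmean : ∑' x : ℤ, (x : ℝ) * (ν x).toReal = 0) (hvar : secondMoment ν < ⊤) (n : ℕ) :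
    secondMoment (nstep ν n 0) = n * secondMoment ν := by
  induction n with
  | zero =>
    rw [secondMoment, tsum_eq_single 0 fun x hx => by simp [nstep, hx]]
    simp [nstep]
  | succ n ih =>
    calc secondMoment (nstep ν (n + 1) 0)
        = ∑' v, nstep ν n 0 v * ∑' w, ν w * ENNReal.ofReal (((w + v : ℤ) : ℝ) ^ 2) := by
          simp only [secondMoment, nstep, ← ENNReal.tsum_mul_right, ← ENNReal.tsum_mul_left]
          rw [ENNReal.tsum_comm]
          refine tsum_congr fun v => ?_
          rw [← (Equiv.addRight v).tsum_eq]
          simp [mul_assoc]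
      _ = ∑' v, nstep ν n 0 v * (secondMoment ν + ENNReal.ofReal ((v : ℝ) ^ 2)) := by
          simp only [tsum_mul_ofReal_add_sq hprob hmean hvar]
      _ = (n + 1) * secondMoment ν := by
          simp only [mul_add, ENNReal.tsum_add, ENNReal.tsum_mul_right, tsum_nstep hprob]
          rw [← secondMoment, ih]
          ring
      _ = _ := by push_cast; ring

theorem green_le_green_zero (hprob : ∑' x, ν x = 1) (x : ℤ) : green ν 0 x ≤ green ν 0 0 :=
  (green_le_green_self hprob 0 x).trans_eq (by simpa using green_add_right (μ := ν) x 0 0)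

/-- Summing over `t < k²` the probability `≥ 1/2` that `S(t) ∈ [-ck, ck]`. -/
theorem natCast_le_mul_green_zero (hprob : ∑' x, ν x = 1)
    (hmean : ∑' x : ℤ, (x : ℝ) * (ν x).toReal = 0) (hvar : secondMoment ν < ⊤) {c : ℕ}
    (hc : 2 * secondMoment ν < c) {k : ℕ} (hk : k ≠ 0) :
    (k : ℝ≥0∞) ≤ 6 * c * green ν 0 0 := by
  have hc0 : c ≠ 0 := by rintro rfl; simp at hc
  set m := c * k
  have hm : 1 ≤ m := Nat.one_le_iff_ne_zero.2 (mul_ne_zero hc0 hk)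
  have hcard : (Finset.Icc (-(m : ℤ)) m).card = 2 * m + 1 := by simp [Int.card_Icc]; omega
  have hmoment (n : ℕ) (hn : n < k ^ 2) :
      2 * secondMoment (nstep ν n 0) ≤ (m : ℝ≥0∞) ^ 2 := by
    have hkc : k ^ 2 * c ≤ m ^ 2 := by
      rw [mul_pow, mul_comm]
      exact Nat.mul_le_mul_right _ (Nat.le_self_pow two_ne_zero c)
    calc 2 * secondMoment (nstep ν n 0) = n * (2 * secondMoment ν) := by
          rw [secondMoment_nstep hprob hmean hvar]; ring
      _ ≤ (k ^ 2 : ℕ) * c := by gcongr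
      _ ≤ (m : ℝ≥0∞) ^ 2 := by exact_mod_cast hkc
  refine (ENNReal.mul_le_mul_iff_right (a := k) (by simpa using hk) (by simp)).1 ?_
  calc (k : ℝ≥0∞) * k = ∑ n ∈ Finset.range (k ^ 2), 1 := by simp; ring
    _ ≤ ∑ n ∈ Finset.range (k ^ 2),
          2 * ∑ x ∈ Finset.Icc (-(m : ℤ)) m, nstep ν n 0 x := by
        gcongr with n hn
        exact one_le_two_mul_sum_Icc (tsum_nstep hprob n 0) (by omega)
          (hmoment n (Finset.mem_range.1 hn))
    _ = 2 * ∑ x ∈ Finset.Icc (-(m : ℤ)) m,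
          ∑ n ∈ Finset.range (k ^ 2), nstep ν n 0 x := by
        rw [← Finset.mul_sum, Finset.sum_comm]
    _ ≤ 2 * ∑ x ∈ Finset.Icc (-(m : ℤ)) m, green ν 0 0 := by
        gcongr with x
        exact (ENNReal.sum_le_tsum _).trans (green_le_green_zero hprob x)
    _ = ((2 * (2 * m + 1) : ℕ) : ℝ≥0∞) * green ν 0 0 := by
        rw [Finset.sum_const, nsmul_eq_mul, hcard]
        push_cast
        ring
    _ ≤ ((6 * m : ℕ) : ℝ≥0∞) * green ν 0 0 := by gcongr ?_ * _; exact_mod_cast (by omega)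
    _ = k * (6 * c * green ν 0 0) := by push_cast [m]; ring

theorem green_zero_eq_top (hprob : ∑' x, ν x = 1)
    (hmean : ∑' x : ℤ, (x : ℝ) * (ν x).toReal = 0) (hvar : secondMoment ν < ⊤) :
    green ν 0 0 = ⊤ := by
  obtain ⟨c, hc⟩ :=
    ENNReal.exists_nat_gt (ENNReal.mul_ne_top (by simp : (2 : ℝ≥0∞) ≠ ⊤) hvar.ne)
  by_contra hG
  obtain ⟨k, hk⟩ := ENNReal.exists_nat_gt
    (ENNReal.mul_ne_top (ENNReal.mul_ne_top (by simp) (by simp) : (6 * c : ℝ≥0∞) ≠ ⊤) hG)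
  have hk0 : k ≠ 0 := by rintro rfl; simp at hk
  exact (natCast_le_mul_green_zero hprob hmean hvar hc hk0).not_gt hk

end IntegerWalk

/-- For the walk started at `n`, the event `{T < T₀}` is the event that the first exit from
`{x > 0} \ {n + 1}` happens at `n + 1`. -/
theorem hit_above_before_zero
    (ν : ℤ → ℝ≥0∞) (hprob : ∑' x : ℤ, ν x = 1)
    (hirr : ∀ x y : ℤ, ∃ n : ℕ, 0 < nstep ν n x y)
    (hmean : ∑' x : ℤ, (x : ℝ) * (ν x).toReal = 0)
    (hvar : (∑' x : ℤ, ν x * ENNReal.ofReal ((x : ℝ) ^ 2)) < ⊤) :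
    Tendsto
      (fun n : ℕ =>
        (exitK ν {x : ℤ | 0 < x ∧ x ≠ (n : ℤ) + 1} (n : ℤ) ((n : ℤ) + 1)).toReal)
      atTop (nhds 1) := by
  set B : ℕ → Set ℤ := fun n => (· + (n : ℤ)) ⁻¹' {x | 0 < x ∧ x ≠ (n : ℤ) + 1}
  have hB : Monotone B := fun n n' h y hy => by
    simp only [B, Set.mem_preimage, Set.mem_ofPred_eq] at hy ⊢
    have : (n : ℤ) ≤ n' := by exact_mod_cast h
    omega
  have hUnion : ⋃ n, B n = {1}ᶜ := by
    ext y
    simp only [B, Set.mem_iUnion, Set.mem_preimage, Set.mem_ofPred_eq, Set.mem_compl_singleton_iff]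
    constructor
    · rintro ⟨n, -, hy⟩
      omega
    · exact fun hy => ⟨y.natAbs + 1, by omega, by omega⟩
  have hrec : green ν 1 1 = ⊤ := by
    simpa using (green_add_right (μ := ν) 1 0 0).trans (green_zero_eq_top hprob hmean hvar)
  have hlim := tendsto_exitK_iUnion (μ := ν) hB (w := 1) (by simp [hUnion]) 0
  rw [hUnion, exitK_compl_singleton_eq_one hprob hirr hrec] at hlim
  refine ((ENNReal.tendsto_toReal ENNReal.one_ne_top).comp hlim).congr fun n => ?_
  have htranslate :=
    exitK_add_right (μ := ν) (A := {x : ℤ | 0 < x ∧ x ≠ (n : ℤ) + 1}) n 0 1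
  rw [zero_add, add_comm 1] at htranslate
  exact congrArg ENNReal.toReal htranslate.symm

end KRWQ
end
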